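/- arXiv:2605.20054 — 2 statements merged into one kernel-verified Lean document; each statement's English description precedes it below -/
import Mathlib

section
/- Let nat be a primitive type with constructors z : nat and s : nat → nat. In eqLJω, the formulas ∀x∀y. (s x = s y → x = y) and ∀x. (s x = z → ⊥) are provable. In particular, with ∀x. x = x and the symmetry/transitivity of equality, eqLJω proves the first four Peano axioms. -/
/-!
The set of all unifiers of `s` and `t` is itself a complete set of unifiers (each unifier is an
instance of itself under the identity substitution), so `=L` may always case over every unifier
`σ`, turning the hypothesis `s = t` into the syntactic identity `sσ = tσ`. Under such a `σ`,
`=R` closes symmetry, transitivity and injectivity, since a unifier of `s x` and `s y` unifies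
`x` and `y`; and `s x`, `z` have no unifier at all, so `=L` proves anything from `s x = z`.
-/

/-- First-order terms: de Bruijn variables (eigenvariables) and
    application of a function symbol (a `Nat` code) to arguments. -/
inductive Tm : Type where
  | var : Nat → Tm
  | app : Nat → List Tm → Tm

namespace Tm

/-- Substitution for variables. -/
def subst (σ : Nat → Tm) : Tm → Tm
  | var n => σ n
  | app f ts => app f (ts.attach.map (fun t => subst σ t.1))
  decreasing_by have := List.sizeOf_lt_of_mem t.2; simp_wf; omega

/-- All free variables are `< k`. -/
inductive Bv : Nat → Tm → Prop where
  | var : ∀ {k n}, n < k → Bv k (var n)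
  | app : ∀ {k f ts}, (∀ t ∈ ts, Bv k t) → Bv k (app f ts)

end Tm

/-- `σ` is a unifier of `s` and `t`. -/
def Unifies (σ : Nat → Tm) (s t : Tm) : Prop := s.subst σ = t.subst σ

/-- `U` is a complete set of unifiers of `s` and `t`. -/
def IsCSU (U : Set (Nat → Tm)) (s t : Tm) : Prop :=
  (∀ σ ∈ U, Unifies σ s t) ∧
  ∀ θ, Unifies θ s t → ∃ σ ∈ U, ∃ δ, ∀ n, (σ n).subst δ = θ n

/-- Formulas of eqLJω (first-order fragment), with de Bruijn binders. -/
inductive Fm : Type where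
  | top | bot
  | atom : Nat → List Tm → Fm
  | eq : Tm → Tm → Fm
  | and : Fm → Fm → Fm
  | imp : Fm → Fm → Fm
  | all : Fm → Fm
  | ex : Fm → Fm

namespace Fm

/-- Lift a substitution under a binder. -/
def up (σ : Nat → Tm) : Nat → Tm
  | 0 => .var 0
  | n + 1 => (σ n).subst (fun k => .var (k + 1))

/-- Apply a substitution to a formula. -/
def substF (σ : Nat → Tm) : Fm → Fm
  | top => top
  | bot => bot
  | atom p ts => atom p (ts.map (Tm.subst σ))
  | eq s t => eq (s.subst σ) (t.subst σ)
  | and A B => and (A.substF σ) (B.substF σ)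
  | imp A B => imp (A.substF σ) (B.substF σ)
  | all A => all (A.substF (up σ))
  | ex A => ex (A.substF (up σ))

/-- Shift all free variables up by one. -/
def shift (A : Fm) : Fm := A.substF (fun n => .var (n + 1))

/-- Instantiate de Bruijn variable 0 with `t`. -/
def subst0 (t : Tm) (A : Fm) : Fm :=
  A.substF (fun n => match n with | 0 => t | n + 1 => .var n)

/-- All free variables are `< k`. -/
inductive Bv : Nat → Fm → Prop where
  | top : Bv k top
  | bot : Bv k bot
  | atom : (∀ t ∈ ts, Tm.Bv k t) → Bv k (atom p ts)
  | eq : Tm.Bv k s → Tm.Bv k t → Bv k (eq s t)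
  | and : Bv k A → Bv k B → Bv k (and A B)
  | imp : Bv k A → Bv k B → Bv k (imp A B)
  | all : Bv (k + 1) A → Bv k (all A)
  | ex : Bv (k + 1) A → Bv k (ex A)

end Fm

/-- The sequent calculus eqLJω: intuitionistic LJ together with the
    rules `=R` (reflexivity on the right) and `=L` (case analysis over a
    complete set of unifiers on the left). -/
inductive Prv : List Fm → Fm → Prop where
  | init : Fm.atom p ts ∈ Γ → Prv Γ (.atom p ts)
  | topR : Prv Γ .top
  | botL : Fm.bot ∈ Γ → Prv Γ C
  | andR : Prv Γ A → Prv Γ B → Prv Γ (.and A B)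
  | andL : Fm.and A B ∈ Γ → Prv (A :: B :: Γ) C → Prv Γ C
  | impR : Prv (A :: Γ) B → Prv Γ (.imp A B)
  | impL : Fm.imp A B ∈ Γ → Prv Γ A → Prv (B :: Γ) C → Prv Γ C
  | allR : Prv (Γ.map Fm.shift) A → Prv Γ (.all A)
  | allL : Fm.all A ∈ Γ → Prv (A.subst0 t :: Γ) C → Prv Γ C
  | exR : Prv Γ (A.subst0 t) → Prv Γ (.ex A)
  | exL : Fm.ex A ∈ Γ → Prv (A :: Γ.map Fm.shift) C.shift → Prv Γ C
  | eqR : Prv Γ (.eq t t)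
  | eqL : Fm.eq s t ∈ Γ → IsCSU U s t →
      (∀ σ ∈ U, Prv (Γ.map (Fm.substF σ)) (C.substF σ)) → Prv Γ C

/-- Zero. -/
def zTm : Tm := .app 0 []
/-- Successor. -/
def sTm (t : Tm) : Tm := .app 1 [t]

@[simp] theorem Tm.subst_var (σ : Nat → Tm) (n : Nat) : (Tm.var n).subst σ = σ n := by
  rw [Tm.subst]

theorem Tm.subst_var_self : ∀ t : Tm, t.subst .var = t
  | .var n => Tm.subst_var _ _
  | .app f ts => by
    rw [Tm.subst]
    congr
    conv_rhs => rw [← List.attach_map_subtype_val ts]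
    exact List.map_congr_left fun t _ => Tm.subst_var_self t.1
termination_by t => t
decreasing_by have := List.sizeOf_lt_of_mem t.2; simp_wf; omega

@[simp] theorem Tm.subst_zTm (σ : Nat → Tm) : zTm.subst σ = zTm := by
  simp [zTm, Tm.subst]

@[simp] theorem Tm.subst_sTm (σ : Nat → Tm) (t : Tm) : (sTm t).subst σ = sTm (t.subst σ) := by
  simp [sTm, Tm.subst]

theorem sTm_inj {s t : Tm} : sTm s = sTm t ↔ s = t := by
  simp [sTm]

theorem sTm_ne_zTm (t : Tm) : sTm t ≠ zTm := by
  simp [sTm, zTm]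

theorem unifies_sTm_iff {σ : Nat → Tm} {s t : Tm} : Unifies σ (sTm s) (sTm t) ↔ Unifies σ s t := by
  simp only [Unifies, Tm.subst_sTm, sTm_inj]

theorem not_unifies_sTm_zTm (σ : Nat → Tm) (t : Tm) : ¬ Unifies σ (sTm t) zTm := by
  simp only [Unifies, Tm.subst_sTm, Tm.subst_zTm]
  exact sTm_ne_zTm _

theorem isCSU_setOf_unifies (s t : Tm) : IsCSU {σ | Unifies σ s t} s t :=
  ⟨fun _ hσ => hσ, fun θ hθ => ⟨θ, hθ, .var, fun n => Tm.subst_var_self (θ n)⟩⟩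

namespace Prv

variable {Γ : List Fm} {s t u : Tm}

theorem eqL_of_unifies {C : Fm} (h : Fm.eq s t ∈ Γ)
    (hC : ∀ σ, Unifies σ s t → Prv (Γ.map (Fm.substF σ)) (C.substF σ)) : Prv Γ C :=
  eqL h (isCSU_setOf_unifies s t) hC

theorem eq_of_mem (h : Fm.eq s t ∈ Γ) : Prv Γ (.eq s t) :=
  eqL_of_unifies h fun σ (hσ : s.subst σ = t.subst σ) => by
    simp only [Fm.substF, hσ]
    exact eqR

theorem eq_symm_of_mem (h : Fm.eq s t ∈ Γ) : Prv Γ (.eq t s) :=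
  eqL_of_unifies h fun σ (hσ : s.subst σ = t.subst σ) => by
    simp only [Fm.substF, hσ]
    exact eqR

theorem eq_trans_of_mem (hst : Fm.eq s t ∈ Γ) (htu : Fm.eq t u ∈ Γ) : Prv Γ (.eq s u) :=
  eqL_of_unifies hst fun σ (hσ : s.subst σ = t.subst σ) => by
    simp only [Fm.substF, hσ]
    exact eq_of_mem (List.mem_map_of_mem htu)

theorem eq_of_eq_sTm (h : Fm.eq (sTm s) (sTm t) ∈ Γ) : Prv Γ (.eq s t) :=
  eqL_of_unifies h fun σ hσ => by
    simp only [Fm.substF, show s.subst σ = t.subst σ from unifies_sTm_iff.mp hσ]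
    exact eqR

theorem of_eq_sTm_zTm {C : Fm} (h : Fm.eq (sTm t) zTm ∈ Γ) : Prv Γ C :=
  eqL_of_unifies h fun σ hσ => (not_unifies_sTm_zTm σ t hσ).elim

end Prv

/-- In eqLJω, successor is injective and never zero; together
    with reflexivity, symmetry and transitivity of equality, eqLJω proves
    the first four Peano axioms. -/
theorem eqLJ_peano_axioms :
    Prv [] (.all (.all (.imp (.eq (sTm (.var 1)) (sTm (.var 0)))
      (.eq (.var 1) (.var 0))))) ∧
    Prv [] (.all (.imp (.eq (sTm (.var 0)) zTm) .bot)) ∧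
    Prv [] (.all (.eq (.var 0) (.var 0))) ∧
    Prv [] (.all (.all (.imp (.eq (.var 1) (.var 0)) (.eq (.var 0) (.var 1))))) ∧
    Prv [] (.all (.all (.all
      (.imp (.eq (.var 2) (.var 1))
        (.imp (.eq (.var 1) (.var 0)) (.eq (.var 2) (.var 0))))))) :=
  ⟨.allR <| .allR <| .impR <| .eq_of_eq_sTm List.mem_cons_self,
    .allR <| .impR <| .of_eq_sTm_zTm List.mem_cons_self,
    .allR .eqR,
    .allR <| .allR <| .impR <| .eq_symm_of_mem List.mem_cons_self,
    .allR <| .allR <| .allR <| .impR <| .impR <|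
      .eq_trans_of_mem (List.mem_cons_of_mem _ List.mem_cons_self) List.mem_cons_self⟩
end

section
/- Constants play a generic role in eqLJω without equality: if a, b : i are distinct constants of primitive type i and P is a formula (not containing the equality connective), then P is provable if and only if ∀x∀y. P[x/a, y/b] is provable. Moreover, this interchangeability fails in the presence of equality: the formula a = b → ⊥ is provable, but the formula obtained by replacing both a and b by a single constant c, namely c = c → ⊥, is not provable. -/
/-- Replace the 0-ary constants `a` and `b` in a term by the de Bruijn
    variables `k+1` and `k` respectively (`k` = number of enclosing binders). -/
def Tm.replC (a b : Nat) (k : Nat) : Tm → Tm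
  | .var n => .var n
  | .app f ts =>
    match ts with
    | [] => if f = a then .var (k + 1) else if f = b then .var k else .app f []
    | t :: ts' =>
      .app f (((t :: ts') : List Tm).attach.map (fun s => Tm.replC a b k s.1))
  decreasing_by have := List.sizeOf_lt_of_mem s.2; simp at this ⊢; omega

/-- Replace the constants `a`, `b` in a formula by the de Bruijn variables
    bound by two universal quantifiers placed outside the (closed) formula. -/
def Fm.replC (a b : Nat) (k : Nat) : Fm → Fm
  | .top => .top
  | .bot => .bot
  | .atom p ts => .atom p (ts.map (Tm.replC a b k))
  | .eq s t => .eq (s.replC a b k) (t.replC a b k)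
  | .and A B => .and (A.replC a b k) (B.replC a b k)
  | .imp A B => .imp (A.replC a b k) (B.replC a b k)
  | .all A => .all (A.replC a b (k + 1))
  | .ex A => .ex (A.replC a b (k + 1))

/-- The formula does not contain the equality connective. -/
def Fm.EqFree : Fm → Prop
  | .top => True
  | .bot => True
  | .atom _ _ => True
  | .eq _ _ => False
  | .and A B => A.EqFree ∧ B.EqFree
  | .imp A B => A.EqFree ∧ B.EqFree
  | .all A => A.EqFree
  | .ex A => A.EqFree

/-!
Abstracting `a, b` to the variables of two outer quantifiers commutes with substitution and with
the shifts of the quantifier rules. Every formula in a derivation of an equality-free sequent is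
equality-free, so no `=L` or `=R` step occurs, and the abstraction maps the derivation of `P` to one
of `P[x/a, y/b]`; two `∀R` steps finish. Conversely, a derivation of `∀x∀y. P[x/a, y/b]` ends with
two `∀R` steps, and derivability is closed under substitution (an `=L` step is replayed with the set
of all unifiers of the instantiated equation), so instantiating `x, y` by `a, b` recovers `P`.

`a = b → ⊥` follows by `=L` with the empty complete set of unifiers of two distinct constants,
whereas `c = c → ⊥` is false in the term model where `=` is syntactic identity, for which eqLJω is
sound.
-/

namespace Tm

@[induction_eliminator]
theorem induction {motive : Tm → Prop} (var : ∀ n, motive (.var n))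
    (app : ∀ f ts, (∀ t ∈ ts, motive t) → motive (.app f ts)) : ∀ t, motive t
  | .var n => var n
  | .app f ts => app f ts fun t _ => induction var app t

@[simp]
theorem subst_var_s2 (σ : Nat → Tm) (n : Nat) : (var n).subst σ = σ n := by
  simp [subst]

@[simp]
theorem subst_app (σ : Nat → Tm) (f : Nat) (ts : List Tm) :
    (app f ts).subst σ = app f (ts.map (subst σ)) := by
  simp [subst]

theorem subst_subst (σ δ : Nat → Tm) (t : Tm) :
    (t.subst σ).subst δ = t.subst fun n => (σ n).subst δ := by
  induction t with
  | var n => simp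
  | app f ts ih => simpa using List.map_congr_left ih

@[simp]
theorem subst_id (t : Tm) : t.subst var = t := by
  induction t with
  | var n => simp
  | app f ts ih => simpa using List.map_congr_left (g := id) ih

def scons (u : Tm) (ν : Nat → Tm) : Nat → Tm
  | 0 => u
  | n + 1 => ν n

@[simp] theorem scons_zero (u : Tm) (ν : Nat → Tm) : scons u ν 0 = u := rfl
@[simp] theorem scons_succ (u : Tm) (ν : Nat → Tm) (n : Nat) : scons u ν (n + 1) = ν n := rfl

end Tm

namespace Fm

theorem subst0_eq_substF (t : Tm) (A : Fm) : A.subst0 t = A.substF (Tm.scons t .var) := by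
  unfold subst0; congr

theorem up_subst_up (σ δ : Nat → Tm) :
    (fun n => (up σ n).subst (up δ)) = up fun n => (σ n).subst δ := by
  funext n
  cases n <;> simp [up, Tm.subst_subst]

theorem substF_substF (σ δ : Nat → Tm) (A : Fm) :
    (A.substF σ).substF δ = A.substF fun n => (σ n).subst δ := by
  induction A generalizing σ δ <;> simp_all [substF, Tm.subst_subst, up_subst_up]

theorem shift_substF_up (σ : Nat → Tm) (A : Fm) :
    A.shift.substF (up σ) = (A.substF σ).shift := by
  simp only [shift, substF_substF, Tm.subst_var_s2]
  rfl

theorem subst0_substF (σ : Nat → Tm) (t : Tm) (A : Fm) :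
    (A.subst0 t).substF σ = (A.substF (up σ)).subst0 (t.subst σ) := by
  simp only [subst0_eq_substF, substF_substF]
  congr; funext n
  cases n <;> simp [up, Tm.subst_subst]

theorem eqFree_substF (σ : Nat → Tm) (A : Fm) : (A.substF σ).EqFree ↔ A.EqFree := by
  induction A generalizing σ <;> simp_all [substF, EqFree]

@[simp]
theorem eqFree_shift (A : Fm) : A.shift.EqFree ↔ A.EqFree :=
  eqFree_substF _ A

@[simp]
theorem eqFree_subst0 (t : Tm) (A : Fm) : (A.subst0 t).EqFree ↔ A.EqFree :=
  eqFree_substF _ A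

end Fm

def Fm.Holds : Fm → (Nat → Tm) → Prop
  | .top, _ => True
  | .bot, _ => False
  | .atom _ _, _ => True
  | .eq s t, ν => s.subst ν = t.subst ν
  | .and A B, ν => A.Holds ν ∧ B.Holds ν
  | .imp A B, ν => A.Holds ν → B.Holds ν
  | .all A, ν => ∀ u, A.Holds (Tm.scons u ν)
  | .ex A, ν => ∃ u, A.Holds (Tm.scons u ν)

namespace Fm

theorem scons_subst_up (σ ν : Nat → Tm) (u : Tm) :
    (fun n => (up σ n).subst (Tm.scons u ν)) = Tm.scons u fun n => (σ n).subst ν := by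
  funext n
  cases n <;> simp [up, Tm.subst_subst]

theorem holds_substF (σ ν : Nat → Tm) (A : Fm) :
    (A.substF σ).Holds ν ↔ A.Holds fun n => (σ n).subst ν := by
  induction A generalizing σ ν <;> simp_all [substF, Holds, Tm.subst_subst, scons_subst_up]

theorem holds_shift (u : Tm) (ν : Nat → Tm) (A : Fm) :
    A.shift.Holds (Tm.scons u ν) ↔ A.Holds ν := by
  simp [shift, holds_substF]

theorem holds_subst0 (t : Tm) (ν : Nat → Tm) (A : Fm) :
    (A.subst0 t).Holds ν ↔ A.Holds (Tm.scons (t.subst ν) ν) := by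
  rw [subst0_eq_substF, holds_substF]
  apply iff_of_eq; congr 1; funext n; cases n <;> simp

end Fm

theorem Prv.holds {Γ : List Fm} {C : Fm} (h : Prv Γ C) (ν : Nat → Tm)
    (hΓ : ∀ D ∈ Γ, D.Holds ν) : C.Holds ν := by
  induction h generalizing ν with
  | init | topR | eqR => trivial
  | botL hm => exact (hΓ _ hm).elim
  | andR _ _ ih₁ ih₂ => exact ⟨ih₁ ν hΓ, ih₂ ν hΓ⟩
  | andL hm _ ih =>
    obtain ⟨hA, hB⟩ := hΓ _ hm
    exact ih ν (by simp_all)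
  | impR _ ih => exact fun hA => ih ν (by simp_all)
  | impL hm _ _ ih₁ ih₂ => exact ih₂ ν (by simp_all [hΓ _ hm (ih₁ ν hΓ)])
  | allR _ ih => exact fun u => ih _ (by simpa [Fm.holds_shift])
  | allL hm _ ih => exact ih ν (by simpa [Fm.holds_subst0] using ⟨hΓ _ hm _, hΓ⟩)
  | exR _ ih => exact ⟨_, (Fm.holds_subst0 _ _ _).1 (ih ν hΓ)⟩
  | exL hm _ ih =>
    obtain ⟨u, hu⟩ := hΓ _ hm
    exact (Fm.holds_shift u ν _).1 (ih _ (by simp_all [Fm.holds_shift]))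
  | eqL hm hU _ ih =>
    obtain ⟨σ, hσ, δ, hδ⟩ := hU.2 ν (hΓ _ hm)
    have hν : (fun n => (σ n).subst δ) = ν := funext hδ
    simpa [Fm.holds_substF, hν] using ih σ hσ δ (by simpa [Fm.holds_substF, hν])

theorem IsCSU.of_not_unifies {s t : Tm} (h : ∀ σ, ¬ Unifies σ s t) : IsCSU ∅ s t :=
  ⟨fun _ h => h.elim, fun θ hθ => (h θ hθ).elim⟩

theorem Prv.substF {Γ : List Fm} {C : Fm} (h : Prv Γ C) (σ : Nat → Tm) :
    Prv (Γ.map (Fm.substF σ)) (C.substF σ) := by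
  induction h generalizing σ with
  | init hm => exact .init (List.mem_map_of_mem hm)
  | topR => exact .topR
  | eqR => exact .eqR
  | botL hm => exact .botL (List.mem_map_of_mem hm)
  | andR _ _ ih₁ ih₂ => exact .andR (ih₁ σ) (ih₂ σ)
  | andL hm _ ih => exact .andL (List.mem_map_of_mem hm) (ih σ)
  | impR _ ih => exact .impR (ih σ)
  | impL hm _ _ ih₁ ih₂ => exact .impL (List.mem_map_of_mem hm) (ih₁ σ) (ih₂ σ)
  | allR _ ih =>
    refine .allR ?_
    simpa [Function.comp_def, Fm.shift_substF_up] using ih (Fm.up σ)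
  | @allL _ _ t _ hm _ ih =>
    refine .allL (t := t.subst σ) (List.mem_map_of_mem hm) ?_
    simpa [Fm.subst0_substF] using ih σ
  | @exR _ _ t _ ih =>
    refine .exR (t := t.subst σ) ?_
    simpa [Fm.subst0_substF] using ih σ
  | exL hm _ ih =>
    refine .exL (List.mem_map_of_mem hm) ?_
    simpa [Function.comp_def, Fm.shift_substF_up] using ih (Fm.up σ)
  | @eqL Γ s t U C hm hU _ ih =>
    refine .eqL (List.mem_map_of_mem hm) (isCSU_setOf_unifies _ _) fun θ hθ => ?_
    have hθσ : Unifies (fun n => (σ n).subst θ) s t := by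
      simpa [Unifies, Tm.subst_subst] using hθ
    obtain ⟨ρ, hρ, δ, hδ⟩ := hU.2 _ hθσ
    have hcomp : (fun n => (ρ n).subst δ) = fun n => (σ n).subst θ := funext hδ
    simpa [Function.comp_def, Fm.substF_substF, hcomp] using ih ρ hρ δ

namespace Tm

variable {a b : Nat}

@[simp]
theorem replC_var (k n : Nat) : (var n).replC a b k = var n := by
  simp [replC]

theorem replC_const (k f : Nat) :
    (app f []).replC a b k = if f = a then var (k + 1) else if f = b then var k else app f [] := by
  simp [replC]

@[simp]
theorem replC_app_cons (k f : Nat) (t : Tm) (ts : List Tm) :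
    (app f (t :: ts)).replC a b k = app f ((t :: ts).map (replC a b k)) := by
  simp [replC, List.map_attach_eq_pmap]

structure ReplCCompatible (a b k₁ k₂ : Nat) (σ σ' : Nat → Tm) : Prop where
  replC_apply : ∀ n, (σ n).replC a b k₂ = σ' n
  apply_succ : σ' (k₁ + 1) = var (k₂ + 1)
  apply_self : σ' k₁ = var k₂

theorem replC_subst {σ σ' : Nat → Tm} {k₁ k₂ : Nat} (h : ReplCCompatible a b k₁ k₂ σ σ') (t : Tm) :
    (t.subst σ).replC a b k₂ = (t.replC a b k₁).subst σ' := by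
  induction t with
  | var n => simp [h.replC_apply]
  | app f ts ih =>
    cases ts with
    | nil =>
      simp only [replC_const, subst_app, List.map_nil]
      split_ifs <;> simp [*, h.apply_succ, h.apply_self]
    | cons t ts => simpa using List.map_congr_left ih

theorem replC_shift (k : Nat) (t : Tm) :
    (t.subst fun n => var (n + 1)).replC a b (k + 1) = (t.replC a b k).subst fun n => var (n + 1) :=
  replC_subst ⟨fun n => replC_var (k + 1) (n + 1), rfl, rfl⟩ t

theorem subst_replC {ζ : Nat → Tm} {k : Nat} (hvar : ∀ n < k, ζ n = var n)
    (ha : ζ (k + 1) = app a []) (hb : ζ k = app b []) {t : Tm} (ht : t.Bv k) :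
    (t.replC a b k).subst ζ = t := by
  induction ht with
  | var hn => simp [hvar _ hn]
  | @app f ts _ ih =>
    cases ts with
    | nil => simp only [replC_const]; split_ifs <;> simp [*]
    | cons t ts => simpa [Function.comp_def] using List.map_congr_left (g := id) ih

end Tm

theorem Tm.ReplCCompatible.up {a b k₁ k₂ : Nat} {σ σ' : Nat → Tm}
    (h : ReplCCompatible a b k₁ k₂ σ σ') :
    ReplCCompatible a b (k₁ + 1) (k₂ + 1) (Fm.up σ) (Fm.up σ') where
  replC_apply n := by
    cases n with
    | zero => simp [Fm.up]
    | succ n => simp [Fm.up, Tm.replC_shift, h.replC_apply]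
  apply_succ := by simp [Fm.up, h.apply_succ]
  apply_self := by simp [Fm.up, h.apply_self]

namespace Fm

variable {a b : Nat}

theorem replC_substF {σ σ' : Nat → Tm} {k₁ k₂ : Nat} (h : Tm.ReplCCompatible a b k₁ k₂ σ σ')
    (A : Fm) : (A.substF σ).replC a b k₂ = (A.replC a b k₁).substF σ' := by
  induction A generalizing σ σ' k₁ k₂ with
  | top | bot => rfl
  | atom p ts => simp [substF, replC, Function.comp_def, Tm.replC_subst h]
  | eq s t => simp [substF, replC, Tm.replC_subst h]
  | and A B ihA ihB | imp A B ihA ihB => simp [substF, replC, ihA h, ihB h]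
  | all A ih | ex A ih => simp [substF, replC, ih h.up]

theorem replC_shift (k : Nat) (A : Fm) : A.shift.replC a b (k + 1) = (A.replC a b k).shift :=
  replC_substF ⟨fun n => Tm.replC_var (k + 1) (n + 1), rfl, rfl⟩ A

theorem replC_subst0 (k : Nat) (t : Tm) (A : Fm) :
    (A.subst0 t).replC a b k = (A.replC a b (k + 1)).subst0 (t.replC a b k) := by
  simp only [subst0_eq_substF]
  refine replC_substF ?_ A
  exact ⟨fun n => by cases n <;> simp, rfl, rfl⟩

end Fm

theorem Fm.substF_replC {a b : Nat} {ζ : Nat → Tm} {k : Nat} (hvar : ∀ n < k, ζ n = .var n)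
    (ha : ζ (k + 1) = .app a []) (hb : ζ k = .app b []) {A : Fm} (hA : A.Bv k) :
    (A.replC a b k).substF ζ = A := by
  induction hA generalizing ζ with
  | top | bot => rfl
  | atom hts =>
    simpa [substF, replC, Function.comp_def] using
      List.map_congr_left (g := id) fun t ht => Tm.subst_replC hvar ha hb (hts t ht)
  | eq hs ht => simp [substF, replC, Tm.subst_replC hvar ha hb hs, Tm.subst_replC hvar ha hb ht]
  | and _ _ ihA ihB | imp _ _ ihA ihB => simp [substF, replC, ihA hvar ha hb, ihB hvar ha hb]
  | all _ ih | ex _ ih =>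
    simp only [substF, replC]
    rw [ih (ζ := up ζ)]
    · rintro (_ | n) hn
      · rfl
      · simp [up, hvar n (by omega)]
    · simp [up, ha]
    · simp [up, hb]

theorem Prv.replC {a b : Nat} {Γ : List Fm} {C : Fm} (h : Prv Γ C) (hΓ : ∀ D ∈ Γ, D.EqFree)
    (hC : C.EqFree) (k : Nat) : Prv (Γ.map (Fm.replC a b k)) (C.replC a b k) := by
  induction h generalizing k with
  | init hm => exact .init (List.mem_map_of_mem hm)
  | topR => exact .topR
  | botL hm => exact .botL (List.mem_map_of_mem hm)
  | andR _ _ ih₁ ih₂ => exact .andR (ih₁ hΓ hC.1 k) (ih₂ hΓ hC.2 k)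
  | andL hm _ ih =>
    obtain ⟨hA, hB⟩ := hΓ _ hm
    exact .andL (List.mem_map_of_mem hm) (ih (by simpa [hA, hB] using hΓ) hC k)
  | impR _ ih => exact .impR (ih (by simpa [hC.1] using hΓ) hC.2 k)
  | impL hm _ _ ih₁ ih₂ =>
    obtain ⟨hA, hB⟩ := hΓ _ hm
    exact .impL (List.mem_map_of_mem hm) (ih₁ hΓ hA k) (ih₂ (by simpa [hB] using hΓ) hC k)
  | allR _ ih =>
    refine .allR ?_
    simpa [Function.comp_def, Fm.replC_shift] using ih (by simpa) hC (k + 1)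
  | @allL _ A t _ hm _ ih =>
    have hA : A.EqFree := hΓ (.all A) hm
    refine .allL (t := t.replC a b k) (List.mem_map_of_mem hm) ?_
    simpa [Fm.replC_subst0] using ih (by simpa [hA] using hΓ) hC k
  | @exR _ _ t _ ih =>
    refine .exR (t := t.replC a b k) ?_
    simpa [Fm.replC_subst0] using ih hΓ (by simpa) k
  | @exL _ A _ hm _ ih =>
    have hA : A.EqFree := hΓ (.ex A) hm
    refine .exL (List.mem_map_of_mem hm) ?_
    simpa [Function.comp_def, Fm.replC_shift] using ih (by simpa [hA] using hΓ) (by simpa) (k + 1)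
  | eqR => exact hC.elim
  | eqL hm => exact (hΓ _ hm).elim

theorem Prv.nil_all_iff {A : Fm} : Prv [] (.all A) ↔ Prv [] A := by
  refine ⟨fun h => ?_, fun h => .allR (by simpa using h)⟩
  cases h with
  | allR h => exact h
  | _ => simp_all

theorem Prv.of_not_unifies {Γ : List Fm} {s t : Tm} {C : Fm} (hm : Fm.eq s t ∈ Γ)
    (h : ∀ σ, ¬ Unifies σ s t) : Prv Γ C :=
  .eqL hm (IsCSU.of_not_unifies h) fun _ hσ => hσ.elim

/-- without equality, constants play a generic role: a closed
    equality-free formula `P` is provable iff `∀x∀y. P[x/a, y/b]` is provable.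
    With equality this fails: `a = b → ⊥` is provable (for distinct constants
    `a`, `b`), but `c = c → ⊥` is not. -/
theorem constants_generic_without_equality (a b c : Nat) (hab : a ≠ b) :
    (∀ P : Fm, P.EqFree → Fm.Bv 0 P →
      (Prv [] P ↔ Prv [] (.all (.all (P.replC a b 0))))) ∧
    Prv [] (.imp (.eq (.app a []) (.app b [])) .bot) ∧
    ¬ Prv [] (.imp (.eq (.app c []) (.app c [])) .bot) := by
  refine ⟨fun P hP hbv => ?_, ?_, fun h => h.holds .var (by simp) rfl⟩
  · rw [Prv.nil_all_iff, Prv.nil_all_iff]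
    refine ⟨fun h => by simpa using h.replC (by simp) hP 0, fun h => ?_⟩
    have hζ := h.substF (Tm.scons (.app b []) (Tm.scons (.app a []) .var))
    rwa [List.map_nil, Fm.substF_replC (by simp) rfl rfl hbv] at hζ
  · exact .impR (.of_not_unifies List.mem_cons_self fun σ => by simp [Unifies, hab])
end
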